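/- arXiv:1901.10158 — 3 statements merged into one kernel-verified Lean document; each statement's English description precedes it below -/
import Mathlib

section
/- For every ε > 0 and all real numbers r and s, one has r·(Ln_ε(r) − Ln_ε(s)) ≥ (ε/2)(r² − s²) + (ε/2)(r − s)² + (ε/2)(ln_ε(r)² − ln_ε(s)²) + (ε/2)(ln_ε(r) − ln_ε(s))² + ρ_ε(r) − ρ_ε(s). -/
/-!
Substituting `r = ρ r + ε log ρ r` into the factor `r`, the identity
`x (x - y) = (x² - y²)/2 + (x - y)²/2` (for `x = r` and `x = log ρ r`) accounts for all the
`ε`-terms exactly, and what remains is `ρ r (log ρ r - log ρ s) ≥ ρ r - ρ s`, the tangent line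
bound for the convex function `exp` at `log ρ r`.
-/

theorem Real.sub_le_mul_log_sub_log {p q : ℝ} (hp : 0 < p) (hq : 0 < q) :
    p - q ≤ p * (Real.log p - Real.log q) := by
  have h := Real.log_le_sub_one_of_pos (div_pos hq hp)
  rw [Real.log_div hq.ne' hp.ne'] at h
  calc p - q = p * (1 - q / p) := by field_simp
    _ ≤ p * (Real.log p - Real.log q) := mul_le_mul_of_nonneg_left (by linarith) hp.le

theorem entropy_pointwise_ineq_general (ε : ℝ) (ρ : ℝ → ℝ)
    (hρ : ∀ r : ℝ, 0 < ρ r ∧ ρ r + ε * Real.log (ρ r) = r) (r s : ℝ) :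
    r * ((ε * r + Real.log (ρ r)) - (ε * s + Real.log (ρ s))) ≥
      ε / 2 * (r ^ 2 - s ^ 2) + ε / 2 * (r - s) ^ 2
        + ε / 2 * ((Real.log (ρ r)) ^ 2 - (Real.log (ρ s)) ^ 2)
        + ε / 2 * (Real.log (ρ r) - Real.log (ρ s)) ^ 2
        + ρ r - ρ s := by
  obtain ⟨hr, hr_eq⟩ := hρ r
  have tangent := Real.sub_le_mul_log_sub_log hr (hρ s).1
  set a := Real.log (ρ r)
  set b := Real.log (ρ s)
  calc r * ((ε * r + a) - (ε * s + b))
      = ε / 2 * (r ^ 2 - s ^ 2) + ε / 2 * (r - s) ^ 2 + ε / 2 * (a ^ 2 - b ^ 2)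
          + ε / 2 * (a - b) ^ 2 + ρ r * (a - b) := by
        linear_combination (b - a) * hr_eq
    _ ≥ _ := by linarith

/-- The pointwise inequality underlying the discrete entropy estimate: with
`ρ_ε r` the unique positive solution of `ρ + ε * log ρ = r`,
`ln_ε r = log (ρ_ε r)` and `Ln_ε r = ε * r + ln_ε r`, one has
`r * (Ln_ε r - Ln_ε s) ≥ (ε/2)(r² - s²) + (ε/2)(r - s)² + (ε/2)(ln_ε r² - ln_ε s²)
  + (ε/2)(ln_ε r - ln_ε s)² + ρ_ε r - ρ_ε s`. -/
theorem entropy_pointwise_ineq (ε : ℝ) (hε : 0 < ε) (ρ : ℝ → ℝ)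
    (hρ : ∀ r : ℝ, 0 < ρ r ∧ ρ r + ε * Real.log (ρ r) = r) (r s : ℝ) :
    r * ((ε * r + Real.log (ρ r)) - (ε * s + Real.log (ρ s))) ≥
      ε / 2 * (r ^ 2 - s ^ 2) + ε / 2 * (r - s) ^ 2
        + ε / 2 * ((Real.log (ρ r)) ^ 2 - (Real.log (ρ s)) ^ 2)
        + ε / 2 * (Real.log (ρ r) - Real.log (ρ s)) ^ 2
        + ρ r - ρ s :=
  entropy_pointwise_ineq_general ε ρ hρ r s
end

section
/- Let β̂ : ℝ → ℝ ∪ {+∞} be a proper, convex, lower semicontinuous function with β̂(r) ≥ 0 for all r, β̂(0) = 0, and β̂(r)/r² → +∞ as |r| → +∞. Then for every γ > 0 there exist ε₁ ∈ (0, 1] and a constant C > 0 such that β̂_ε(r) ≥ γ r² − C for all r ∈ ℝ and all ε ∈ (0, ε₁). -/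
open scoped ENNReal

/-- The Moreau–Yosida regularization (as an `ℝ≥0∞`-valued infimum) of a proper
convex l.s.c. function `β̂ : ℝ → [0, +∞]`. -/
noncomputable def moreauEnv (bhat : ℝ → ℝ≥0∞) (ε : ℝ) (r : ℝ) : ℝ≥0∞ :=
  ⨅ s : ℝ, ENNReal.ofReal ((r - s) ^ 2 / (2 * ε)) + bhat s

/-!
Take `K = 2γ` in the growth condition: then `β̂(s) ≥ 2γ s² - 2γ R²` for every `s`. For
`ε ≤ 1/(4γ)` the quadratic penalty dominates `2γ (r - s)²`, and since
`(r - s)² + s² ≥ r²/2`, every term of the infimum defining `β̂_ε(r)` is at least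
`γ r² - 2γ R²`.
-/

variable {bhat : ℝ → ℝ≥0∞}

lemma ofReal_sub_le_of_forall_abs_ge {K R : ℝ} (hK : 0 ≤ K)
    (hR : ∀ r : ℝ, R ≤ |r| → ENNReal.ofReal (K * r ^ 2) ≤ bhat r) (s : ℝ) :
    ENNReal.ofReal (K * s ^ 2 - K * R ^ 2) ≤ bhat s := by
  rcases le_or_gt R |s| with hs | hs
  · exact (ENNReal.ofReal_le_ofReal (by nlinarith [sq_nonneg R])).trans (hR s hs)
  · have : s ^ 2 ≤ R ^ 2 := by nlinarith [sq_abs s, abs_nonneg s]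
    rw [ENNReal.ofReal_of_nonpos (by nlinarith)]
    exact bot_le

lemma moreauEnv_ne_top (hproper : ∃ s : ℝ, bhat s ≠ ⊤) (ε r : ℝ) :
    moreauEnv bhat ε r ≠ ⊤ := by
  obtain ⟨s, hs⟩ := hproper
  exact ne_top_of_le_ne_top (ENNReal.add_ne_top.2 ⟨ENNReal.ofReal_ne_top, hs⟩) (iInf_le _ s)

lemma ofReal_le_moreauEnv_of_quadratic_lower_bound {K C ε : ℝ} (hK : 0 ≤ K) (hε : 0 < ε)
    (hKε : 2 * K * ε ≤ 1) (hbound : ∀ s : ℝ, ENNReal.ofReal (K * s ^ 2 - C) ≤ bhat s)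
    (r : ℝ) :
    ENNReal.ofReal (K / 2 * r ^ 2 - C) ≤ moreauEnv bhat ε r := by
  refine le_iInf fun s => ?_
  have hpenalty : K * (r - s) ^ 2 ≤ (r - s) ^ 2 / (2 * ε) := by
    rw [le_div_iff₀ (by positivity)]
    nlinarith [sq_nonneg (r - s)]
  calc ENNReal.ofReal (K / 2 * r ^ 2 - C)
      ≤ ENNReal.ofReal ((r - s) ^ 2 / (2 * ε) + (K * s ^ 2 - C)) :=
        ENNReal.ofReal_le_ofReal (by nlinarith [sq_nonneg (r - 2 * s)])
    _ ≤ ENNReal.ofReal ((r - s) ^ 2 / (2 * ε)) + ENNReal.ofReal (K * s ^ 2 - C) :=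
        ENNReal.ofReal_add_le
    _ ≤ ENNReal.ofReal ((r - s) ^ 2 / (2 * ε)) + bhat s := by gcongr; exact hbound s

theorem moreauEnv_superquadratic_general (bhat : ℝ → ℝ≥0∞)
    (hproper : ∃ s : ℝ, bhat s ≠ ⊤)
    (hgrowth : ∀ K : ℝ, ∃ R : ℝ, ∀ r : ℝ, R ≤ |r| → ENNReal.ofReal (K * r ^ 2) ≤ bhat r)
    (γ : ℝ) (hγ : 0 < γ) :
    ∃ ε₁ ∈ Set.Ioc (0 : ℝ) 1, ∃ C : ℝ, 0 < C ∧
      ∀ r : ℝ, ∀ ε : ℝ, 0 < ε → ε < ε₁ →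
        γ * r ^ 2 - C ≤ (moreauEnv bhat ε r).toReal := by
  obtain ⟨R, hR⟩ := hgrowth (2 * γ)
  have hbound := ofReal_sub_le_of_forall_abs_ge (by positivity) hR
  refine ⟨min 1 (1 / (4 * γ)), ⟨lt_min one_pos (by positivity), min_le_left _ _⟩,
    2 * γ * R ^ 2 + 1, by positivity, fun r ε hε hεlt => ?_⟩
  have hKε : 2 * (2 * γ) * ε ≤ 1 := by
    have := hεlt.trans_le (min_le_right _ _)
    rw [lt_div_iff₀ (by positivity)] at this
    linarith
  have hlow := ofReal_le_moreauEnv_of_quadratic_lower_bound (by positivity) hε hKε hbound r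
  rw [ENNReal.ofReal_le_iff_le_toReal (moreauEnv_ne_top hproper ε r)] at hlow
  linarith

/-- For `β̂ : ℝ → [0, +∞]` proper, convex, lower semicontinuous with `β̂(0) = 0`
and `β̂(r)/r² → +∞` as `|r| → +∞`: for every `γ > 0` there exist `ε₁ ∈ (0,1]`
and `C > 0` such that `β̂_ε(r) ≥ γ r² - C` for all `r ∈ ℝ` and all `ε ∈ (0, ε₁)`. -/
theorem moreauEnv_superquadratic (bhat : ℝ → ℝ≥0∞)
    (hproper : ∃ s : ℝ, bhat s ≠ ⊤)
    (hconv : ∀ a b t : ℝ, 0 ≤ t → t ≤ 1 →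
      bhat (t * a + (1 - t) * b) ≤
        ENNReal.ofReal t * bhat a + ENNReal.ofReal (1 - t) * bhat b)
    (hlsc : LowerSemicontinuous bhat)
    (hzero : bhat 0 = 0)
    (hgrowth : ∀ K : ℝ, ∃ R : ℝ, ∀ r : ℝ, R ≤ |r| → ENNReal.ofReal (K * r ^ 2) ≤ bhat r)
    (γ : ℝ) (hγ : 0 < γ) :
    ∃ ε₁ ∈ Set.Ioc (0 : ℝ) 1, ∃ C : ℝ, 0 < C ∧
      ∀ r : ℝ, ∀ ε : ℝ, 0 < ε → ε < ε₁ →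
        γ * r ^ 2 - C ≤ (moreauEnv bhat ε r).toReal :=
  moreauEnv_superquadratic_general bhat hproper hgrowth γ hγ
end

section
/- Let β̂ : ℝ → ℝ ∪ {+∞} be a proper, convex, lower semicontinuous function with β̂(r) ≥ 0 for all r and β̂(0) = 0, and let m₀ ∈ ℝ and δ > 0 be such that β̂(m₀ − δ) < +∞ and β̂(m₀ + δ) < +∞. Then there exist constants c > 0 and d > 0 such that β_ε(r)·(r − m₀) ≥ c·|β_ε(r)| − d for all r ∈ ℝ and all ε ∈ (0, 1]. -/
open scoped ENNReal
open Set Filter Topology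

/-!
The Yosida approximation `b = (r - J_ε r)/ε` is a subgradient of `β̂` at `J_ε r`, because
`J_ε r` minimizes `s ↦ (r - s)²/(2ε) + β̂ s`; as `β̂ ≥ 0`, this gives `b (s - J_ε r) ≤ β̂ s` for
every `s` in the domain. Testing with `s = m₀ + δ` when `b ≥ 0` and `s = m₀ - δ` when `b < 0`,
and using `b (r - J_ε r) ≥ 0`, yields `b (r - m₀) ≥ δ |b| - max (β̂ (m₀ - δ)) (β̂ (m₀ + δ))`.
-/

lemma le_of_forall_mem_Ioc_le_add_mul {a b c : ℝ} (h : ∀ t ∈ Ioc (0 : ℝ) 1, a ≤ b + t * c) :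
    a ≤ b := by
  have hlim : Tendsto (fun t : ℝ => b + t * c) (𝓝[>] 0) (𝓝 b) := by
    have hcont : Continuous fun t : ℝ => b + t * c := by fun_prop
    simpa using (hcont.tendsto 0).mono_left nhdsWithin_le_nhds
  refine ge_of_tendsto hlim ?_
  filter_upwards [Ioc_mem_nhdsGT (zero_lt_one' ℝ)] with t ht using h t ht

section Resolvent

variable {f : ℝ → ℝ≥0∞} {ε r j s : ℝ}

lemma ne_top_of_isMinOn_quadratic_add
    (hmin : IsMinOn (fun s => ENNReal.ofReal ((r - s) ^ 2 / (2 * ε)) + f s) univ j)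
    (hs : f s ≠ ⊤) : f j ≠ ⊤ :=
  ne_top_of_le_ne_top (by simp [hs]) (le_add_self.trans (isMinOn_univ_iff.1 hmin s))

lemma mul_sub_le_add_of_isMinOn_quadratic_add
    (hconv : ∀ a b t : ℝ, 0 ≤ t → t ≤ 1 →
      f (t * a + (1 - t) * b) ≤ ENNReal.ofReal t * f a + ENNReal.ofReal (1 - t) * f b)
    (hε : 0 < ε)
    (hmin : IsMinOn (fun s => ENNReal.ofReal ((r - s) ^ 2 / (2 * ε)) + f s) univ j)
    (hs : f s ≠ ⊤) {t : ℝ} (ht : t ∈ Ioc (0 : ℝ) 1) :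
    (r - j) / ε * (s - j) ≤ (f s).toReal - (f j).toReal + t * ((s - j) ^ 2 / (2 * ε)) := by
  have hj := ne_top_of_isMinOn_quadratic_add hmin hs
  have hcomb := (isMinOn_univ_iff.1 hmin (t * s + (1 - t) * j)).trans
    (add_le_add_right (hconv s j t ht.1.le ht.2) _)
  have hreal := ENNReal.toReal_mono (by finiteness) hcomb
  rw [ENNReal.toReal_add (by finiteness) (by finiteness),
    ENNReal.toReal_add (by finiteness) (by finiteness),
    ENNReal.toReal_add (by finiteness) (by finiteness), ENNReal.toReal_mul, ENNReal.toReal_mul,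
    ENNReal.toReal_ofReal ht.1.le, ENNReal.toReal_ofReal (sub_nonneg.2 ht.2),
    ENNReal.toReal_ofReal (by positivity), ENNReal.toReal_ofReal (by positivity)] at hreal
  have hexpand : (r - (t * s + (1 - t) * j)) ^ 2 / (2 * ε) = (r - j) ^ 2 / (2 * ε)
      - t * ((r - j) / ε * (s - j)) + t * (t * ((s - j) ^ 2 / (2 * ε))) := by
    field_simp
    ring
  refine le_of_mul_le_mul_left ?_ ht.1
  linarith

lemma mul_sub_le_of_isMinOn_quadratic_add
    (hconv : ∀ a b t : ℝ, 0 ≤ t → t ≤ 1 →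
      f (t * a + (1 - t) * b) ≤ ENNReal.ofReal t * f a + ENNReal.ofReal (1 - t) * f b)
    (hε : 0 < ε)
    (hmin : IsMinOn (fun s => ENNReal.ofReal ((r - s) ^ 2 / (2 * ε)) + f s) univ j)
    (hs : f s ≠ ⊤) :
    (r - j) / ε * (s - j) ≤ (f s).toReal - (f j).toReal :=
  le_of_forall_mem_Ioc_le_add_mul fun _ ht ↦
    mul_sub_le_add_of_isMinOn_quadratic_add hconv hε hmin hs ht

end Resolvent

lemma mul_sub_ge_of_mul_sub_le {b r j m₀ δ B₁ B₂ : ℝ} (hrj : 0 ≤ b * (r - j))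
    (h₁ : b * (m₀ - δ - j) ≤ B₁) (h₂ : b * (m₀ + δ - j) ≤ B₂) :
    δ * |b| - max B₁ B₂ ≤ b * (r - m₀) := by
  have := le_max_left B₁ B₂
  have := le_max_right B₁ B₂
  rcases le_or_gt 0 b with hb | hb
  · rw [abs_of_nonneg hb]
    linarith
  · rw [abs_of_neg hb]
    linarith

theorem yosida_coercive_interior_general (bhat : ℝ → ℝ≥0∞)
    (hconv : ∀ a b t : ℝ, 0 ≤ t → t ≤ 1 →
      bhat (t * a + (1 - t) * b) ≤
        ENNReal.ofReal t * bhat a + ENNReal.ofReal (1 - t) * bhat b)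
    (m₀ δ : ℝ) (hδ : 0 < δ)
    (hfin₁ : bhat (m₀ - δ) ≠ ⊤) (hfin₂ : bhat (m₀ + δ) ≠ ⊤)
    (J : ℝ → ℝ → ℝ)
    (hJ : ∀ ε ∈ Set.Ioc (0 : ℝ) 1, ∀ r s : ℝ,
      ENNReal.ofReal ((r - J ε r) ^ 2 / (2 * ε)) + bhat (J ε r) ≤
        ENNReal.ofReal ((r - s) ^ 2 / (2 * ε)) + bhat s) :
    ∃ c : ℝ, 0 < c ∧ ∃ d : ℝ, 0 < d ∧
      ∀ ε ∈ Set.Ioc (0 : ℝ) 1, ∀ r : ℝ,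
        ((r - J ε r) / ε) * (r - m₀) ≥ c * |(r - J ε r) / ε| - d := by
  refine ⟨δ, hδ, max (bhat (m₀ - δ)).toReal (bhat (m₀ + δ)).toReal + 1, by positivity, ?_⟩
  intro ε hε r
  have hsub {s : ℝ} (hs : bhat s ≠ ⊤) : (r - J ε r) / ε * (s - J ε r) ≤ (bhat s).toReal :=
    (mul_sub_le_of_isMinOn_quadratic_add hconv hε.1 (isMinOn_univ_iff.2 (hJ ε hε r)) hs).trans
      (sub_le_self _ ENNReal.toReal_nonneg)
  have hrj : 0 ≤ (r - J ε r) / ε * (r - J ε r) := by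
    rw [div_mul_eq_mul_div]
    exact div_nonneg (mul_self_nonneg _) hε.1.le
  linarith [mul_sub_ge_of_mul_sub_le hrj (hsub hfin₁) (hsub hfin₂)]

/-- For `β̂ : ℝ → [0, +∞]` proper, convex, lower semicontinuous with `β̂(0) = 0`,
and `m₀ ∈ ℝ`, `δ > 0` with `β̂(m₀ - δ) < +∞` and `β̂(m₀ + δ) < +∞`: there exist
`c > 0` and `d > 0` such that `β_ε(r) * (r - m₀) ≥ c * |β_ε(r)| - d` for all
`r ∈ ℝ` and all `ε ∈ (0, 1]`, where `β_ε(r) = (r - J_ε(r))/ε` is the Yosida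
approximation built from the resolvent `J_ε`. -/
theorem yosida_coercive_interior (bhat : ℝ → ℝ≥0∞)
    (hproper : ∃ s : ℝ, bhat s ≠ ⊤)
    (hconv : ∀ a b t : ℝ, 0 ≤ t → t ≤ 1 →
      bhat (t * a + (1 - t) * b) ≤
        ENNReal.ofReal t * bhat a + ENNReal.ofReal (1 - t) * bhat b)
    (hlsc : LowerSemicontinuous bhat)
    (hzero : bhat 0 = 0)
    (m₀ δ : ℝ) (hδ : 0 < δ)
    (hfin₁ : bhat (m₀ - δ) ≠ ⊤) (hfin₂ : bhat (m₀ + δ) ≠ ⊤)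
    (J : ℝ → ℝ → ℝ)
    (hJ : ∀ ε ∈ Set.Ioc (0 : ℝ) 1, ∀ r s : ℝ,
      ENNReal.ofReal ((r - J ε r) ^ 2 / (2 * ε)) + bhat (J ε r) ≤
        ENNReal.ofReal ((r - s) ^ 2 / (2 * ε)) + bhat s) :
    ∃ c : ℝ, 0 < c ∧ ∃ d : ℝ, 0 < d ∧
      ∀ ε ∈ Set.Ioc (0 : ℝ) 1, ∀ r : ℝ,
        ((r - J ε r) / ε) * (r - m₀) ≥ c * |(r - J ε r) / ε| - d :=
  yosida_coercive_interior_general bhat hconv m₀ δ hδ hfin₁ hfin₂ J hJ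
end
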